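/- arXiv:1808.10243 — 9 statements merged into one kernel-verified Lean document; each statement's English description precedes it below -/
import Mathlib

section
/- Let (G_{mn}) be, for each m ∈ ℕ, a direct sequence of abelian groups G_{m1} → G_{m2} → ⋯. Then the natural map φ : colim_{f ∈ ℕ^ℕ} ∏_{m ∈ ℕ} G_{m,f(m)} → ∏_{m ∈ ℕ} colim_{n ∈ ℕ} G_{mn}, sending the class of a sequence (x_m)_{m} with x_m ∈ G_{m,f(m)} to the sequence of classes ([x_m])_m, is an isomorphism of abelian groups. Here ℕ^ℕ is directed by pointwise order, and for f ≤ g the bonding map ∏_m G_{m,f(m)} → ∏_m G_{m,g(m)} is the product of the bonding maps G_{m,f(m)} → G_{m,g(m)}. -/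
/-- For each `m ∈ ℕ` let `G m 0 → G m 1 → ⋯` be a direct sequence of abelian
groups (with transitive bonding maps `f m n n'`).  Order `ℕ → ℕ` pointwise (a directed
set), and for `F : ℕ → ℕ` let `P F = ∏ₘ G m (F m)`, with bonding maps for `F ≤ F'` given
coordinatewise.  Then the natural map
`φ : colim_{F ∈ ℕ^ℕ} ∏ₘ G m (F m) → ∏ₘ colim_n G m n`, sending the class of `(xₘ)ₘ` to
`([xₘ])ₘ`, is an isomorphism of abelian groups (being a homomorphism by construction,
the claim is that it is bijective). -/
theorem stmt0 (G : ℕ → ℕ → Type) [∀ m n, AddCommGroup (G m n)]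
    (f : ∀ m (n n' : ℕ), n ≤ n' → G m n →+ G m n')
    (hself : ∀ m n (h : n ≤ n) (x : G m n), f m n n h x = x)
    (hcomp : ∀ m (n n' n'' : ℕ) (h : n ≤ n') (h' : n' ≤ n'') (x : G m n),
      f m n' n'' h' (f m n n' h x) = f m n n'' (h.trans h') x)
    [DecidableEq (ℕ → ℕ)] :
    Function.Bijective
      (AddCommGroup.DirectLimit.lift (fun F : ℕ → ℕ => ∀ m, G m (F m))
        (fun F F' (h : F ≤ F') =>
          AddMonoidHom.mk' (fun x m => f m (F m) (F' m) (h m) (x m))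
            (fun x y => by funext m; simp [map_add]))
        (∀ m, AddCommGroup.DirectLimit (G m) (f m))
        (fun F => AddMonoidHom.mk'
          (fun x m => AddCommGroup.DirectLimit.of (G m) (f m) (F m) (x m))
          (fun x y => by funext m; simp [map_add]))
        (fun F F' hFF' x => by
          funext m
          exact AddCommGroup.DirectLimit.of_f (hij := hFF' m) (x := x m))) := by
  have hsys : ∀ m, DirectedSystem (G m) fun n n' h => f m n n' h := fun m =>
    ⟨fun n x => hself m n le_rfl x, fun _ _ _ h h' x => hcomp m _ _ _ h h' x⟩
  set Φ := AddCommGroup.DirectLimit.lift (fun F : ℕ → ℕ => ∀ m, G m (F m))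
        (fun F F' (h : F ≤ F') =>
          AddMonoidHom.mk' (fun x m => f m (F m) (F' m) (h m) (x m))
            (fun x y => by funext m; simp [map_add]))
        (∀ m, AddCommGroup.DirectLimit (G m) (f m))
        (fun F => AddMonoidHom.mk'
          (fun x m => AddCommGroup.DirectLimit.of (G m) (f m) (F m) (x m))
          (fun x y => by funext m; simp [map_add]))
        (fun F F' hFF' x => by
          funext m
          exact AddCommGroup.DirectLimit.of_f (hij := hFF' m) (x := x m)) with hΦ
  constructor
  · -- injectivity
    rw [injective_iff_map_eq_zero]
    intro z hz
    induction z using AddCommGroup.DirectLimit.induction_on with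
    | ih F x =>
      rw [hΦ, AddCommGroup.DirectLimit.lift_of] at hz
      -- hz : (fun m => of (x m)) = 0
      have hz' : ∀ m, AddCommGroup.DirectLimit.of (G m) (f m) (F m) (x m) = 0 := fun m =>
        congrFun hz m
      have key : ∀ m, ∃ n, ∃ h : F m ≤ n, f m (F m) n h (x m) = 0 := fun m => by
        haveI := hsys m
        exact AddCommGroup.DirectLimit.of.zero_exact (F m) (x m) (hz' m)
      choose n hn h0 using key
      set Fs : ℕ → ℕ := fun m => max (F m) (n m) with hFs
      have hFn : F ≤ Fs := fun m => le_max_left _ _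
      set bigf : ∀ F F' : ℕ → ℕ, F ≤ F' → ((∀ m, G m (F m)) →+ (∀ m, G m (F' m))) :=
        fun F F' (h : F ≤ F') =>
          AddMonoidHom.mk' (fun x m => f m (F m) (F' m) (h m) (x m))
            (fun x y => by funext m; simp [map_add]) with hbigf
      have key2 := AddCommGroup.DirectLimit.of_f (G := fun F : ℕ → ℕ => ∀ m, G m (F m))
        (f := bigf) (i := F) (j := Fs) hFn x
      have hx0 : bigf F Fs hFn x = 0 := by
        funext m
        show f m (F m) (Fs m) (hFn m) (x m) = (0 : ∀ m, G m (Fs m)) m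
        rw [← hcomp m (F m) (n m) (Fs m) (hn m) (le_max_right _ _), h0, map_zero]
        rfl
      rw [← key2, hx0, map_zero]
  · -- surjectivity
    intro y
    have key : ∀ m, ∃ n, ∃ x : G m n, AddCommGroup.DirectLimit.of (G m) (f m) n x = y m :=
      fun m => AddCommGroup.DirectLimit.induction_on (y m) fun n x => ⟨n, x, rfl⟩
    choose n x hx using key
    refine ⟨AddCommGroup.DirectLimit.of (fun F : ℕ → ℕ => ∀ m, G m (F m)) _ n x, ?_⟩
    rw [hΦ, AddCommGroup.DirectLimit.lift_of]
    funext m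
    exact hx m
end

section
/- Let M be a metric space, X ⊆ M a closed subset, and suppose M ∖ X is the disjoint union of nonempty subsets (C_i)_{i∈ℕ}, each C_i open in M ∖ X, which are scattered towards X and such that each C_i is closed in M ∖ X. Then each C_n is open and closed in M (not merely in M ∖ X). -/
open Filter

/-- If `X ⊆ M` is closed, `M ∖ X` is the disjoint union of nonempty subsets
`C i`, each clopen in the subspace `M ∖ X`, and the family `(C i)` is scattered towards
`X`, then each `C n` is open and closed in `M` itself. -/
theorem stmt6 {M : Type} [MetricSpace M] (X : Set M) (C : ℕ → Set M)
    (hX : IsClosed X)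
    (hne : ∀ i, (C i).Nonempty)
    (hdisj : ∀ i j, i ≠ j → Disjoint (C i) (C j))
    (hcover : (⋃ i, C i) = Xᶜ)
    (hopen : ∀ i, ∃ U : Set M, IsOpen U ∧ C i = U ∩ Xᶜ)
    (hclosed : ∀ i, ∃ V : Set M, IsClosed V ∧ C i = V ∩ Xᶜ)
    (hscat : ∀ (n : ℕ → ℕ) (y y' : ℕ → M) (x : M), x ∈ X →
      (∀ k, y k ∈ C (n k)) → (∀ k, y' k ∈ C (n k)) →
      Tendsto y atTop (nhds x) → Tendsto y' atTop (nhds x)) :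
    ∀ n, IsOpen (C n) ∧ IsClosed (C n) := by
  intro n
  constructor
  · obtain ⟨U, hU, hCU⟩ := hopen n
    rw [hCU]
    exact hU.inter hX.isOpen_compl
  · obtain ⟨V, hV, hCV⟩ := hclosed n
    rw [← closure_eq_iff_isClosed]
    apply Set.Subset.antisymm _ subset_closure
    intro x hx
    by_cases hxX : x ∈ X
    · exfalso
      rw [mem_closure_iff_seq_limit] at hx
      obtain ⟨y, hy, hty⟩ := hx
      obtain ⟨c, hc⟩ := hne n
      have := hscat (fun _ => n) y (fun _ => c) x hxX hy (fun _ => hc) hty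
      have hcx : c = x := tendsto_nhds_unique tendsto_const_nhds this
      have : c ∈ Xᶜ := by
        have := hc
        rw [hCV] at this
        exact this.2
      exact this (hcx ▸ hxX)
    · have hxV : x ∈ V := by
        have : closure (C n) ⊆ V := by
          rw [hCV]
          exact closure_minimal (Set.inter_subset_left) hV
        exact this hx
      rw [hCV]
      exact ⟨hxV, hxX⟩
end

section
/- Let M be a metric space, X ⊆ M closed, and M ∖ X = ⊔_{i∈ℕ} C_i a disjoint union of nonempty clopen (in M ∖ X) subsets scattered towards X. Let M_⊙ be the quotient of M obtained by collapsing each C_i to a point, identify M_⊙ ∖ X with ℕ, and define ν = { U ⊆ ℕ : U ∪ X is open in M_⊙ }. Then every open neighborhood N of X in M contains C_U := ⋃_{i∈U} C_i for some U ∈ ν. -/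
open Filter

/-- With `X ⊆ M` closed and `M ∖ X = ⊔ᵢ Cᵢ` a disjoint union of nonempty
clopen (in `M ∖ X`) subsets scattered towards `X`, let `M_⊙` be the quotient collapsing
each `Cᵢ` to a point and `ν = {U ⊆ ℕ | U ∪ X is open in M_⊙}`.  By the definition of the
quotient topology, `U ∪ X` is open in `M_⊙` iff its preimage `X ∪ ⋃_{i∈U} Cᵢ` is open
in `M`, which is how `ν` is rendered here.  Then every open neighborhood `N` of `X` in
`M` contains `C_U = ⋃_{i∈U} Cᵢ` for some `U ∈ ν`. -/
theorem stmt7 {M : Type} [MetricSpace M] (X : Set M) (C : ℕ → Set M)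
    (hX : IsClosed X)
    (hne : ∀ i, (C i).Nonempty)
    (hdisj : ∀ i j, i ≠ j → Disjoint (C i) (C j))
    (hcover : (⋃ i, C i) = Xᶜ)
    (hopen : ∀ i, ∃ U : Set M, IsOpen U ∧ C i = U ∩ Xᶜ)
    (hclosed : ∀ i, ∃ V : Set M, IsClosed V ∧ C i = V ∩ Xᶜ)
    (hscat : ∀ (n : ℕ → ℕ) (y y' : ℕ → M) (x : M), x ∈ X →
      (∀ k, y k ∈ C (n k)) → (∀ k, y' k ∈ C (n k)) →
      Tendsto y atTop (nhds x) → Tendsto y' atTop (nhds x)) :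
    ∀ N : Set M, IsOpen N → X ⊆ N →
      ∃ U : Set ℕ, IsOpen (X ∪ ⋃ i ∈ U, C i) ∧ (⋃ i ∈ U, C i) ⊆ N := by
  intro N hN hXN
  refine ⟨{i | C i ⊆ N}, ?_, Set.iUnion₂_subset fun i hi => hi⟩
  set W : Set M := X ∪ ⋃ i ∈ {i : ℕ | C i ⊆ N}, C i with hW
  rw [isOpen_iff_mem_nhds]
  rintro p (hpX | hpC)
  · -- p ∈ X
    by_contra hnot
    have hseq : ∀ k : ℕ, ∃ y : M, dist y p < 1 / (k + 1) ∧ y ∉ W := by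
      intro k
      by_contra h
      push_neg at h
      exact hnot (Metric.mem_nhds_iff.2 ⟨1 / (k + 1), by positivity,
        fun y hy => h y (by simpa [Metric.mem_ball] using hy)⟩)
    choose y hyd hyW using hseq
    have hyX : ∀ k, y k ∉ X := fun k hk => hyW k (Or.inl hk)
    have hyC : ∀ k, ∃ i, y k ∈ C i := by
      intro k
      have : y k ∈ ⋃ i, C i := by rw [hcover]; exact hyX k
      exact Set.mem_iUnion.1 this
    choose n hn using hyC
    have hnN : ∀ k, ¬ C (n k) ⊆ N := by
      intro k hsub
      exact hyW k (Or.inr (Set.mem_biUnion hsub (hn k)))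
    have hy' : ∀ k, ∃ z, z ∈ C (n k) ∧ z ∉ N := by
      intro k
      rcases Set.not_subset.1 (hnN k) with ⟨z, hz, hzN⟩
      exact ⟨z, hz, hzN⟩
    choose y' hy'C hy'N using hy'
    have hty : Tendsto y atTop (nhds p) := by
      rw [tendsto_iff_dist_tendsto_zero]
      refine squeeze_zero (fun k => dist_nonneg) (fun k => (hyd k).le) ?_
      exact tendsto_one_div_add_atTop_nhds_zero_nat
    have hty' := hscat n y y' p hpX hn hy'C hty
    have : ∀ᶠ k in atTop, y' k ∈ N := hty' (hN.mem_nhds (hXN hpX))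
    rcases this.exists with ⟨k, hk⟩
    exact hy'N k hk
  · -- p in some C i with C i ⊆ N
    rcases Set.mem_iUnion₂.1 hpC with ⟨i, hi, hpi⟩
    rcases hopen i with ⟨V, hV, hCV⟩
    have hCopen : IsOpen (C i) := hCV ▸ hV.inter hX.isOpen_compl
    exact Filter.mem_of_superset (hCopen.mem_nhds hpi)
      (fun z hz => Or.inr (Set.mem_biUnion hi hz))
end

section
/- Let M be a metric space, X ⊆ M closed, and M ∖ X = ⊔_{i∈ℕ} C_i a disjoint union of nonempty clopen subsets scattered towards X. Let M_⊙ be the quotient collapsing each C_i to a point, identify M_⊙ ∖ X with ℕ, and define κ = { K ⊆ ℕ : K has compact closure in M_⊙ }. Then every compact subset C of M is contained in C_K ∪ Q for some K ∈ κ and some compact Q ⊆ X, where C_K = ⋃_{i∈K} C_i. -/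
open Filter

/-- With `X ⊆ M` closed, `M ∖ X = ⊔ᵢ Cᵢ` a disjoint union of nonempty clopen
subsets scattered towards `X`, and `M_⊙` the quotient collapsing each `Cᵢ` to a point
(identified, via a section `c` of the quotient map choosing a point `c i ∈ C i`, with the
subspace `X ∪ {c i | i}` of `M`), define `κ = {K ⊆ ℕ | K has compact closure in M_⊙}`,
rendered as `{K | IsCompact (closure (c '' K))}`.  Then every compact `C ⊆ M` is contained
in `C_K ∪ Q` for some `K ∈ κ` and some compact `Q ⊆ X`. -/
theorem stmt8 {M : Type} [MetricSpace M] (X : Set M) (C : ℕ → Set M)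
    (hX : IsClosed X)
    (hne : ∀ i, (C i).Nonempty)
    (hdisj : ∀ i j, i ≠ j → Disjoint (C i) (C j))
    (hcover : (⋃ i, C i) = Xᶜ)
    (hopen : ∀ i, ∃ U : Set M, IsOpen U ∧ C i = U ∩ Xᶜ)
    (hclosed : ∀ i, ∃ V : Set M, IsClosed V ∧ C i = V ∩ Xᶜ)
    (hscat : ∀ (n : ℕ → ℕ) (y y' : ℕ → M) (x : M), x ∈ X →
      (∀ k, y k ∈ C (n k)) → (∀ k, y' k ∈ C (n k)) →
      Tendsto y atTop (nhds x) → Tendsto y' atTop (nhds x))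
    (c : ℕ → M) (hc : ∀ i, c i ∈ C i) :
    ∀ Cpt : Set M, IsCompact Cpt →
      ∃ K : Set ℕ, IsCompact (closure (c '' K)) ∧
        ∃ Q : Set M, Q ⊆ X ∧ IsCompact Q ∧ Cpt ⊆ (⋃ i ∈ K, C i) ∪ Q := by
  intro Cpt hCpt
  classical
  set K : Set ℕ := {i | (C i ∩ Cpt).Nonempty} with hKdef
  have hsub : ∀ i, C i ⊆ Xᶜ := fun i => hcover ▸ Set.subset_iUnion C i
  -- Lemma A: for any sequence of indices in K, a subsequence of the chosen points converges.
  have lemA : ∀ n : ℕ → ℕ, (∀ k, n k ∈ K) →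
      ∃ φ : ℕ → ℕ, StrictMono φ ∧ ∃ p, Tendsto (fun k => c (n (φ k))) atTop (nhds p) := by
    intro n hn
    choose y hy using hn
    obtain ⟨x, hxCpt, φ, hφ, hyx⟩ := hCpt.isSeqCompact (fun k => (hy k).2)
    by_cases hxX : x ∈ X
    · refine ⟨φ, hφ, x, ?_⟩
      exact hscat (n ∘ φ) (y ∘ φ) (fun k => c (n (φ k))) x hxX
        (fun k => (hy (φ k)).1) (fun k => hc _) hyx
    · have hxU : x ∈ ⋃ i, C i := by rw [hcover]; exact hxX
      obtain ⟨m, hxm⟩ := Set.mem_iUnion.mp hxU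
      obtain ⟨U, hU, hCm⟩ := hopen m
      have hxUm : x ∈ U := (hCm ▸ hxm).1
      have hev : ∀ᶠ k in atTop, (y ∘ φ) k ∈ U := hyx (hU.mem_nhds hxUm)
      refine ⟨φ, hφ, c m, ?_⟩
      refine Tendsto.congr' ?_ (tendsto_const_nhds (x := c m))
      filter_upwards [hev] with k hk
      have hyCm : y (φ k) ∈ C m := by
        rw [hCm]; exact ⟨hk, hsub _ (hy (φ k)).1⟩
      have heq : n (φ k) = m := by
        by_contra h
        exact (hdisj _ _ h).le_bot ⟨(hy (φ k)).1, hyCm⟩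
      rw [heq]
  -- Sequential compactness of the closure.
  have seq : IsSeqCompact (closure (c '' K)) := by
    intro x hx
    have hz : ∀ k : ℕ, ∃ i ∈ K, dist (x k) (c i) < 1 / (k + 1) := by
      intro k
      obtain ⟨b, hb, hdb⟩ := Metric.mem_closure_iff.mp (hx k) (1 / (k + 1)) (by positivity)
      obtain ⟨i, hi, rfl⟩ := hb
      exact ⟨i, hi, hdb⟩
    choose n hn hdn using hz
    obtain ⟨φ, hφ, p, hp⟩ := lemA n hn
    have hpmem : p ∈ closure (c '' K) :=
      mem_closure_of_tendsto hp
        (Eventually.of_forall fun k => Set.mem_image_of_mem c (hn (φ k)))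
    refine ⟨p, hpmem, φ, hφ, ?_⟩
    have hd0 : Tendsto (fun k => dist (c (n (φ k))) (x (φ k))) atTop (nhds 0) := by
      apply squeeze_zero (fun k => dist_nonneg) (g := fun k : ℕ => 1 / (k + 1 : ℝ))
      · intro k
        rw [dist_comm]
        refine (hdn (φ k)).le.trans ?_
        apply one_div_le_one_div_of_le (by positivity)
        have : k ≤ φ k := hφ.le_apply
        exact_mod_cast Nat.succ_le_succ this
      · exact tendsto_one_div_add_atTop_nhds_zero_nat
    exact hp.congr_dist hd0
  refine ⟨K, seq.isCompact, X ∩ Cpt, Set.inter_subset_left, hCpt.inter_left hX, ?_⟩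
  intro x hx
  by_cases hxX : x ∈ X
  · exact Or.inr ⟨hxX, hx⟩
  · have hxU : x ∈ ⋃ i, C i := by rw [hcover]; exact hxX
    obtain ⟨i, hi⟩ := Set.mem_iUnion.mp hxU
    exact Or.inl (Set.mem_biUnion ⟨x, hi, hx⟩ hi)
end

section
/- Let M be a metric space, X ⊆ M closed, and M ∖ X = ⊔_{i∈ℕ} C_i scattered towards X with each C_i clopen in M ∖ X. With M_⊙ the quotient collapsing each C_i to a point, set κ = { K ⊆ ℕ : K has compact closure in M_⊙ } and ν̄ = { F ⊆ ℕ : F is closed in M_⊙ }. Then for S ⊆ ℕ: (a) S ∈ ν̄ if and only if S ∩ K is finite for every K ∈ κ; (b) S ∈ κ if and only if S ∩ F is finite for every F ∈ ν̄. -/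
open Filter

/-- In the setting of a closed `X ⊆ M` with `M ∖ X = ⊔ᵢ Cᵢ` scattered towards
`X` (each `Cᵢ` nonempty and clopen in `M ∖ X`), with `M_⊙` the quotient collapsing each
`Cᵢ` to a point, set `κ = {K ⊆ ℕ | K has compact closure in M_⊙}` (rendered via a section
`c` of the quotient map as `IsCompact (closure (c '' K))`) and
`ν̄ = {F ⊆ ℕ | F is closed in M_⊙}` (by the quotient topology, `F` is closed in `M_⊙` iff
its preimage `⋃_{i∈F} Cᵢ` is closed in `M`).  Then for `S ⊆ ℕ`:
(a) `S ∈ ν̄` iff `S ∩ K` is finite for every `K ∈ κ`;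
(b) `S ∈ κ` iff `S ∩ F` is finite for every `F ∈ ν̄`. -/
theorem stmt9 {M : Type} [MetricSpace M] (X : Set M) (C : ℕ → Set M)
    (hX : IsClosed X)
    (hne : ∀ i, (C i).Nonempty)
    (hdisj : ∀ i j, i ≠ j → Disjoint (C i) (C j))
    (hcover : (⋃ i, C i) = Xᶜ)
    (hopen : ∀ i, ∃ U : Set M, IsOpen U ∧ C i = U ∩ Xᶜ)
    (hclosed : ∀ i, ∃ V : Set M, IsClosed V ∧ C i = V ∩ Xᶜ)
    (hscat : ∀ (n : ℕ → ℕ) (y y' : ℕ → M) (x : M), x ∈ X →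
      (∀ k, y k ∈ C (n k)) → (∀ k, y' k ∈ C (n k)) →
      Tendsto y atTop (nhds x) → Tendsto y' atTop (nhds x))
    (c : ℕ → M) (hc : ∀ i, c i ∈ C i) :
    ∀ S : Set ℕ,
      (IsClosed (⋃ i ∈ S, C i) ↔
        ∀ K : Set ℕ, IsCompact (closure (c '' K)) → (S ∩ K).Finite) ∧
      (IsCompact (closure (c '' S)) ↔
        ∀ F : Set ℕ, IsClosed (⋃ i ∈ F, C i) → (S ∩ F).Finite) := by
  have hXc : IsOpen Xᶜ := hX.isOpen_compl
  have hCopen : ∀ i, IsOpen (C i) := by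
    intro i; obtain ⟨U, hU, hCU⟩ := hopen i; rw [hCU]; exact hU.inter hXc
  have hCsub : ∀ i, C i ⊆ Xᶜ := by
    intro i; rw [← hcover]; exact Set.subset_iUnion C i
  have hcX : ∀ i, c i ∉ X := fun i => hCsub i (hc i)
  have heq : ∀ i j (y : M), y ∈ C i → y ∈ C j → i = j := by
    intro i j y hi hj
    by_contra h
    exact Set.disjoint_left.mp (hdisj i j h) hi hj
  -- convergence helper
  have tendsto_of_dist : ∀ (f : ℕ → M) (a : M),
      (∀ j : ℕ, dist (f j) a < 1 / (j + 1)) → Tendsto f atTop (nhds a) := by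
    intro f a hf
    rw [tendsto_iff_dist_tendsto_zero]
    exact squeeze_zero (fun j => dist_nonneg) (fun j => (hf j).le)
      tendsto_one_div_add_atTop_nhds_zero_nat
  -- L_seq : a limit of an injectively-indexed sequence of representatives lies in X
  have L_seq : ∀ (ι : ℕ → ℕ), Function.Injective ι → ∀ z : M,
      Tendsto (fun k => c (ι k)) atTop (nhds z) → z ∈ X := by
    intro ι hι z hty
    by_contra hzX
    have hz' : z ∈ ⋃ i, C i := by rw [hcover]; exact hzX
    obtain ⟨j, hj⟩ := Set.mem_iUnion.mp hz'
    have hev : ∀ᶠ k in atTop, c (ι k) ∈ C j := hty ((hCopen j).mem_nhds hj)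
    obtain ⟨N, hN⟩ := eventually_atTop.mp hev
    have h1 : ι N = j := heq _ _ _ (hc (ι N)) (hN N le_rfl)
    have h2 : ι (N + 1) = j := heq _ _ _ (hc (ι (N + 1))) (hN (N + 1) (Nat.le_succ N))
    exact Nat.succ_ne_self N (hι (h2.trans h1.symm))
  -- L2 : closedness of the union iff no representative-closure point in X
  have L2 : ∀ T : Set ℕ, IsClosed (⋃ i ∈ T, C i) ↔ ∀ x ∈ X, x ∉ closure (c '' T) := by
    intro T
    constructor
    · intro hcl x hxX hxcl
      have hsub : c '' T ⊆ ⋃ i ∈ T, C i := by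
        rintro _ ⟨m, hm, rfl⟩; exact Set.mem_biUnion hm (hc m)
      have : x ∈ ⋃ i ∈ T, C i := hcl.closure_subset ((closure_mono hsub) hxcl)
      obtain ⟨i, _, hxi⟩ := Set.mem_iUnion₂.mp this
      exact hCsub i hxi hxX
    · intro h
      apply isClosed_of_closure_subset
      intro z hz
      by_cases hzX : z ∈ X
      · exfalso
        obtain ⟨y, hy, hty⟩ := mem_closure_iff_seq_limit.mp hz
        have hy' : ∀ k, ∃ i, ∃ _ : i ∈ T, y k ∈ C i := fun k => Set.mem_iUnion₂.mp (hy k)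
        choose n hnT hyn using hy'
        have hty' : Tendsto (fun k => c (n k)) atTop (nhds z) :=
          hscat n y (fun k => c (n k)) z hzX hyn (fun k => hc (n k)) hty
        exact h z hzX (mem_closure_of_tendsto hty'
          (Eventually.of_forall fun k => Set.mem_image_of_mem c (hnT k)))
      · have hz' : z ∈ ⋃ i, C i := by rw [hcover]; exact hzX
        obtain ⟨j, hj⟩ := Set.mem_iUnion.mp hz'
        obtain ⟨y, hyj, hyU⟩ := mem_closure_iff.mp hz (C j) (hCopen j) hj
        obtain ⟨i, hiT, hyi⟩ := Set.mem_iUnion₂.mp hyU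
        exact Set.mem_biUnion (heq j i y hyj hyi ▸ hiT) hj
  -- L3 : accumulation in X gives infinitely many nearby representatives
  have L3 : ∀ (T : Set ℕ) (x : M), x ∈ X → x ∈ closure (c '' T) →
      ∀ ε : ℝ, 0 < ε → {m | m ∈ T ∧ dist (c m) x < ε}.Infinite := by
    intro T x hxX hxcl ε hε hfin
    set A := {m | m ∈ T ∧ dist (c m) x < ε} with hA
    have hB : (c '' A).Finite := hfin.image c
    have hxB : x ∉ c '' A := by
      rintro ⟨m, hm, rfl⟩; exact hcX m hxX
    have hsplit : closure (c '' T) ⊆ (c '' A) ∪ closure ((c '' T) \ (c '' A)) := by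
      have hsub : c '' T ⊆ (c '' A) ∪ ((c '' T) \ (c '' A)) := fun y hy =>
        (em (y ∈ c '' A)).elim Or.inl fun h => Or.inr ⟨hy, h⟩
      calc closure (c '' T) ⊆ closure ((c '' A) ∪ ((c '' T) \ (c '' A))) := closure_mono hsub
        _ = closure (c '' A) ∪ closure ((c '' T) \ (c '' A)) := closure_union
        _ = (c '' A) ∪ closure ((c '' T) \ (c '' A)) := by rw [hB.isClosed.closure_eq]
    have hx2 : x ∈ closure ((c '' T) \ (c '' A)) := (hsplit hxcl).resolve_left hxB
    obtain ⟨b, hb, hd⟩ := Metric.mem_closure_iff.mp hx2 ε hε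
    obtain ⟨⟨m, hmT, rfl⟩, hnb⟩ := hb
    exact hnb (Set.mem_image_of_mem c ⟨hmT, by rwa [dist_comm] at hd⟩)
  -- main finiteness lemma
  have main : ∀ A B : Set ℕ, IsCompact (closure (c '' A)) → IsClosed (⋃ i ∈ B, C i) →
      (A ∩ B).Finite := by
    intro A B hA hB
    by_contra hfin
    have hinf : (A ∩ B).Infinite := hfin
    let e := Set.Infinite.natEmbedding _ hinf
    set ι : ℕ → ℕ := fun k => (e k : ℕ) with hι
    have hiinj : Function.Injective ι := fun a b hab => e.injective (Subtype.ext hab)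
    have hmem : ∀ k, ι k ∈ A ∩ B := fun k => (e k).2
    have hsub : ∀ k, c (ι k) ∈ closure (c '' A) := fun k =>
      subset_closure (Set.mem_image_of_mem c (hmem k).1)
    obtain ⟨z, _, φ, hφ, hty⟩ := hA.tendsto_subseq hsub
    have hzX : z ∈ X := L_seq (ι ∘ φ) (hiinj.comp hφ.injective) z hty
    exact (L2 B).mp hB z hzX (mem_closure_of_tendsto hty
      (Eventually.of_forall fun k => Set.mem_image_of_mem c (hmem (φ k)).2))
  intro S
  have hpos : ∀ j : ℕ, (0 : ℝ) < 1 / (j + 1) := fun j => by positivity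
  refine ⟨⟨fun hcl K hK => ?_, fun h => ?_⟩, ⟨fun hcpt F hF => main S F hcpt hF, fun h => ?_⟩⟩
  · rw [Set.inter_comm]; exact main K S hK hcl
  · -- (a) backward
    rw [L2 S]
    intro x hxX hxcl
    have hinf : ∀ j : ℕ, {m | m ∈ S ∧ dist (c m) x < 1 / (j + 1)}.Infinite :=
      fun j => L3 S x hxX hxcl _ (hpos j)
    have hch : ∀ j : ℕ, ∃ m, (m ∈ S ∧ dist (c m) x < 1 / (j + 1)) ∧ j < m := by
      intro j
      obtain ⟨b, hb, hlt⟩ := (hinf j).exists_gt j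
      exact ⟨b, hb, hlt⟩
    choose m hm hgt using hch
    set K := Set.range m with hKdef
    have htym : Tendsto (fun j => c (m j)) atTop (nhds x) :=
      tendsto_of_dist _ _ fun j => (hm j).2
    have hKcomp : IsCompact (closure (c '' K)) := by
      have h1 : IsCompact (insert x (Set.range fun j => c (m j))) :=
        htym.isCompact_insert_range
      refine IsCompact.of_isClosed_subset h1 isClosed_closure ?_
      have : c '' K ⊆ insert x (Set.range fun j => c (m j)) := by
        rintro _ ⟨_, ⟨j, rfl⟩, rfl⟩
        exact Set.mem_insert_of_mem _ ⟨j, rfl⟩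
      exact closure_minimal this h1.isClosed
    have hKinf : K.Infinite := by
      intro hfin
      obtain ⟨B, hB⟩ := hfin.bddAbove
      exact absurd (hB (Set.mem_range_self B)) (not_le.mpr (hgt B))
    refine hKinf ((h K hKcomp).subset ?_)
    rintro _ ⟨j, rfl⟩
    exact ⟨(hm j).1, Set.mem_range_self j⟩
  · -- (b) backward
    apply IsSeqCompact.isCompact
    intro z hz
    have happrox : ∀ j : ℕ, ∃ m, m ∈ S ∧ dist (z j) (c m) < 1 / (j + 1) := by
      intro j
      obtain ⟨b, hb, hd⟩ := Metric.mem_closure_iff.mp (hz j) _ (hpos j)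
      obtain ⟨mm, hmm, rfl⟩ := hb
      exact ⟨mm, hmm, hd⟩
    choose n hnS hnd using happrox
    have hsubseq : ∃ (a : M) (φ : ℕ → ℕ), StrictMono φ ∧
        Tendsto ((fun k => c (n k)) ∘ φ) atTop (nhds a) := by
      by_contra hno
      push_neg at hno
      have hfib : ∀ m : ℕ, {k | n k = m}.Finite := by
        intro m
        by_contra hfin
        have hinf : {k | n k = m}.Infinite := hfin
        obtain ⟨φ, hφ, hP⟩ := extraction_forall_of_frequently
          (fun _ : ℕ => Nat.frequently_atTop_iff_infinite.mpr hinf)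
        refine hno (c m) φ hφ ?_
        have : ((fun k => c (n k)) ∘ φ) = fun j => c m := by
          funext j; simp only [Function.comp]; rw [hP j]
        rw [this]
        exact tendsto_const_nhds
      have hFinf : (Set.range n).Infinite := by
        intro hfin
        have huniv : (Set.univ : Set ℕ) ⊆ ⋃ m ∈ Set.range n, {k | n k = m} :=
          fun k _ => Set.mem_biUnion (Set.mem_range_self k) rfl
        exact Set.infinite_univ ((hfin.biUnion fun m _ => hfib m).subset huniv)
      have hFcl : IsClosed (⋃ i ∈ Set.range n, C i) := by
        rw [L2]
        intro x hxX hxcl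
        have hfreq : ∀ j : ℕ, ∃ᶠ k in atTop, dist (c (n k)) x < 1 / (j + 1) := by
          intro j
          rw [Nat.frequently_atTop_iff_infinite]
          intro hfin
          have hsub : {m | m ∈ Set.range n ∧ dist (c m) x < 1 / (j + 1)} ⊆
              n '' {k | dist (c (n k)) x < 1 / (j + 1)} := by
            rintro _ ⟨⟨k, rfl⟩, hd⟩
            exact ⟨k, hd, rfl⟩
          exact L3 (Set.range n) x hxX hxcl _ (hpos j) ((hfin.image n).subset hsub)
        obtain ⟨φ, hφ, hP⟩ := extraction_forall_of_frequently hfreq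
        exact hno x φ hφ (tendsto_of_dist _ _ hP)
      refine hFinf ((h _ hFcl).subset ?_)
      rintro _ ⟨k, rfl⟩
      exact ⟨hnS k, Set.mem_range_self k⟩
    obtain ⟨a, φ, hφ, hty⟩ := hsubseq
    refine ⟨a, mem_closure_of_tendsto hty
      (Eventually.of_forall fun k => Set.mem_image_of_mem c (hnS (φ k))), φ, hφ, ?_⟩
    rw [tendsto_iff_dist_tendsto_zero]
    have hd0 : Tendsto (fun k => 1 / ((φ k : ℝ) + 1) + dist (c (n (φ k))) a) atTop (nhds 0) := by
      have h1 : Tendsto (fun k => 1 / ((φ k : ℝ) + 1)) atTop (nhds 0) :=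
        tendsto_one_div_add_atTop_nhds_zero_nat.comp hφ.tendsto_atTop
      have h2 : Tendsto (fun k => dist (c (n (φ k))) a) atTop (nhds 0) :=
        tendsto_iff_dist_tendsto_zero.mp hty
      have := h1.add h2
      rwa [add_zero] at this
    refine squeeze_zero (fun k => dist_nonneg) (fun k => ?_) hd0
    calc dist (z (φ k)) a ≤ dist (z (φ k)) (c (n (φ k))) + dist (c (n (φ k))) a :=
          dist_triangle _ _ _
      _ ≤ 1 / ((φ k : ℝ) + 1) + dist (c (n (φ k))) a :=
          add_le_add (hnd (φ k)).le le_rfl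
end

section
/- Consider the family of abelian groups ℤ_{ij} = ℤ indexed by (i,j) ∈ ℕ × ℕ. Let κ_ℕ consist of the sets K_j = ℕ × {1,…,j} for j ∈ ℕ, and ν̄_0 consist of the sets F_f = { (i,j) : i ≤ f(j) } for f ∈ ℕ^ℕ. Then the subgroup of ∏_{(i,j)} ℤ_{ij} of elements supported in some K_j equals ⊕_{j∈ℕ} ∏_{i∈ℕ} ℤ_{ij}, and this subgroup equals the intersection over all f ∈ ℕ^ℕ of (∏_{j∈ℕ} ∏_{i>f(j)} ℤ_{ij}) ⊕ (⊕_{j∈ℕ} ⊕_{i≤f(j)} ℤ_{ij}), i.e., the set of elements whose support meets each F_f in a finite set. -/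
/-- For the family of copies of `ℤ` indexed by `ℕ × ℕ`, the subgroup of
`∏_{(i,j)} ℤ` of elements supported in some `K_j = ℕ × {0,…,j₀}` equals
`⊕_j ∏_i ℤ` (the elements with only finitely many nonzero rows), and it also equals the
set of elements whose support meets each `F_f = {(i,j) | i ≤ f j}` (for `f ∈ ℕ^ℕ`) in a
finite set. -/
theorem stmt10 :
    ({g : ℕ × ℕ → ℤ | ∃ j₀ : ℕ, ∀ p : ℕ × ℕ, g p ≠ 0 → p.2 ≤ j₀}
        = {g : ℕ × ℕ → ℤ | {j : ℕ | ∃ i : ℕ, g (i, j) ≠ 0}.Finite}) ∧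
    ({g : ℕ × ℕ → ℤ | ∃ j₀ : ℕ, ∀ p : ℕ × ℕ, g p ≠ 0 → p.2 ≤ j₀}
        = {g : ℕ × ℕ → ℤ | ∀ f : ℕ → ℕ,
            {p : ℕ × ℕ | g p ≠ 0 ∧ p.1 ≤ f p.2}.Finite}) := by
  classical
  have key : ∀ g : ℕ × ℕ → ℤ, {j : ℕ | ∃ i : ℕ, g (i, j) ≠ 0}.Finite →
      ∃ j₀ : ℕ, ∀ p : ℕ × ℕ, g p ≠ 0 → p.2 ≤ j₀ := by
    intro g hfin
    obtain ⟨b, hb⟩ := hfin.bddAbove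
    exact ⟨b, fun p hp => hb ⟨p.1, by rwa [Prod.mk.eta]⟩⟩
  constructor
  · ext g
    simp only [Set.mem_setOf_eq]
    constructor
    · rintro ⟨j₀, h⟩
      exact (Set.finite_Iic j₀).subset (fun j ⟨i, hi⟩ => h (i, j) hi)
    · exact key g
  · ext g
    simp only [Set.mem_setOf_eq]
    constructor
    · rintro ⟨j₀, h⟩ f
      apply ((Set.finite_Iic ((Finset.Iic j₀).sup f)).prod (Set.finite_Iic j₀)).subset
      rintro ⟨i, j⟩ ⟨hg, hif⟩
      have hj : j ≤ j₀ := h (i, j) hg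
      exact ⟨hif.trans (Finset.le_sup (Finset.mem_Iic.mpr hj)), hj⟩
    · intro h
      apply key g
      set f : ℕ → ℕ := fun j => if hj : ∃ i : ℕ, g (i, j) ≠ 0 then hj.choose else 0 with hf
      apply ((h f).image Prod.snd).subset
      intro j hj
      simp only [Set.mem_setOf_eq] at hj
      refine ⟨(f j, j), ⟨?_, le_refl _⟩, rfl⟩
      simp only [hf, dif_pos hj]
      exact hj.choose_spec
end

section
/- The natural map ⊕_{n∈ℕ} ℤ → Hom(Hom(⊕_{n∈ℕ} ℤ, ℤ), ℤ), i.e. the evaluation map into the double dual, is an isomorphism; equivalently, Hom(∏_{n∈ℕ} ℤ, ℤ) ≅ ⊕_{n∈ℕ} ℤ, with the isomorphism given by restriction of functionals on ∏_ℕ ℤ to finitely supported sequences (this is the Specker theorem). -/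
/-!
Suppose `φ (y k) ≠ 0` for a family `y k` with `y k` supported on `[k, ∞)`. Choose moduli
`N 0 ∣ N 1 ∣ ⋯` that outgrow the partial sums `S K = ∑ k < K, N k * φ (y k)` and put
`z = ∑ k, N k • y k`, a finite sum in each coordinate. Then `N K ∣ φ z - S K` for every `K`,
which forces `φ z = S K` for all large `K`, although `S (K + 1) - S K = N K * φ (y K) ≠ 0`.
With `y k` a basis vector `e (f k)`, `f k > k`, this shows that `φ (e n) = 0` for almost all `n`;
with `y k` the tail of `x` from `k` on, it shows that `φ x = 0` if `φ` kills every `e n`.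
-/

open Finset

namespace Specker

theorem not_forall_dvd_sub {S N : ℕ → ℤ} (hN : ∀ K, |S K| + K < N K)
    (hS : ∀ K, S (K + 1) ≠ S K) (a : ℤ) : ¬ ∀ K, N K ∣ a - S K := by
  intro hdvd
  have heq : ∀ K : ℕ, |a| ≤ K → a = S K := fun K hK => sub_eq_zero.mp <|
    Int.eq_zero_of_abs_lt_dvd (hdvd K) <| by linarith [abs_sub a (S K), hN K]
  have hK : |a| ≤ (a.natAbs : ℤ) := (Int.abs_eq_natAbs a).le
  exact hS a.natAbs ((heq _ (by push_cast; linarith)).symm.trans (heq _ hK))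

/-- `(S K, N K)`: the partial sum `∑ k < K, N k * c k` and the modulus `N K`. -/
def sumAndModulus (c : ℕ → ℤ) : ℕ → ℤ × ℤ
  | 0 => (0, 1)
  | K + 1 =>
    let S := (sumAndModulus c K).1 + (sumAndModulus c K).2 * c K
    (S, (sumAndModulus c K).2 * (|S| + K + 2))

theorem exists_moduli (c : ℕ → ℤ) : ∃ N : ℕ → ℤ,
    (∀ K, N K ∣ N (K + 1)) ∧ ∀ K, |∑ k ∈ range K, N k * c k| + K < N K := by
  set N := fun K => (sumAndModulus c K).2
  have hS : ∀ K, (sumAndModulus c K).1 = ∑ k ∈ range K, N k * c k := by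
    intro K
    induction K with
    | zero => rfl
    | succ K ih => rw [sum_range_succ, ← ih]; rfl
  refine ⟨N, fun K => dvd_mul_right _ _, fun K => ?_⟩
  rw [← hS]
  induction K with
  | zero => simp [N, sumAndModulus]
  | succ K ih =>
    have hNK : 1 ≤ N K := by linarith [abs_nonneg (sumAndModulus c K).1]
    have hstep : N (K + 1) = N K * (|(sumAndModulus c (K + 1)).1| + K + 2) := rfl
    rw [hstep]
    push_cast
    nlinarith [abs_nonneg (sumAndModulus c (K + 1)).1]

/-- `a ↦ ∑ k, a k • y k`, meaningful when `y k` vanishes below `k`. -/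
def series (y : ℕ → ℕ → ℤ) : (ℕ → ℤ) →+ (ℕ → ℤ) :=
  AddMonoidHom.mk' (fun a j => ∑ k ∈ range (j + 1), a k * y k j) fun a b => by
    ext j; simp [add_mul, sum_add_distrib]

variable {y : ℕ → ℕ → ℤ}

theorem series_eq_sum (hy : ∀ k j, j < k → y k j = 0) {a : ℕ → ℤ} {K : ℕ}
    (ha : ∀ k, K ≤ k → a k = 0) : series y a = ∑ k ∈ range K, a k • y k := by
  ext j
  have hvanish : ∀ k ∉ range K ∩ range (j + 1), a k * y k j = 0 := fun k hk => by
    rw [mem_inter, mem_range, mem_range, not_and_or, not_lt, not_lt] at hk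
    rcases hk with hk | hk
    · rw [ha k hk, zero_mul]
    · rw [hy k j (by omega), mul_zero]
  simp only [series, AddMonoidHom.mk'_apply, Finset.sum_apply, Pi.smul_apply, smul_eq_mul]
  rw [← sum_subset inter_subset_right fun k _ => hvanish k,
    sum_subset inter_subset_left fun k _ => hvanish k]

theorem dvd_map_series_sub (φ : (ℕ → ℤ) →+ ℤ) (hy : ∀ k j, j < k → y k j = 0)
    {a : ℕ → ℤ} {d : ℤ} {K : ℕ} (hd : ∀ k, K ≤ k → d ∣ a k) :
    d ∣ φ (series y a) - ∑ k ∈ range K, a k * φ (y k) := by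
  set head : ℕ → ℤ := fun k => if k < K then a k else 0
  set tail : ℕ → ℤ := fun k => if k < K then 0 else a k / d
  have hsplit : a = head + d • tail := by
    ext k
    by_cases hk : k < K
    · simp [head, tail, hk]
    · simp [head, tail, hk, Int.mul_ediv_cancel' (hd k (not_lt.mp hk))]
  have hhead : series y head = ∑ k ∈ range K, a k • y k := by
    rw [series_eq_sum hy fun k hk => if_neg (not_lt.mpr hk)]
    exact sum_congr rfl fun k hk => by rw [if_pos (mem_range.mp hk)]
  refine ⟨φ (series y tail), ?_⟩
  nth_rewrite 1 [hsplit]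
  simp only [map_add, map_zsmul, hhead, map_sum, smul_eq_mul]
  ring

theorem exists_map_eq_zero (φ : (ℕ → ℤ) →+ ℤ) (hy : ∀ k j, j < k → y k j = 0) :
    ∃ k, φ (y k) = 0 := by
  by_contra! hφ
  obtain ⟨N, hdvd, hN⟩ := exists_moduli fun k => φ (y k)
  refine not_forall_dvd_sub hN (fun K => ?_) (φ (series y N)) fun K =>
    dvd_map_series_sub φ hy fun k hk => Nat.rel_of_forall_rel_succ_of_le (· ∣ ·) hdvd hk
  have hNK : 0 < N K := by linarith [hN K, abs_nonneg (∑ k ∈ range K, N k * φ (y k))]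
  simpa [sum_range_succ] using mul_ne_zero hNK.ne' (hφ K)

theorem eq_zero_of_map_single (φ : (ℕ → ℤ) →+ ℤ) (hφ : ∀ n, φ (Pi.single n 1) = 0) :
    φ = 0 := by
  ext x
  set tail : ℕ → ℕ → ℤ := fun k j => if k ≤ j then x j else 0
  have htail : ∀ k, φ (tail k) = φ x := fun k => by
    have hx : x = tail k + ∑ j ∈ range k, x j • Pi.single j 1 := by
      ext i
      by_cases hi : k ≤ i <;> simp [tail, hi, Pi.single_apply]
    rw [hx]
    simp only [map_add, map_sum, map_zsmul, hφ, smul_zero, sum_const_zero, add_zero]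
  obtain ⟨k, hk⟩ := exists_map_eq_zero φ fun k j (hjk : j < k) => if_neg (not_le.mpr hjk)
  rw [← htail k, hk, AddMonoidHom.zero_apply]

theorem finite_setOf_map_single_ne_zero (φ : (ℕ → ℤ) →+ ℤ) :
    {n | φ (Pi.single n 1) ≠ 0}.Finite := by
  by_contra hinf
  choose f hf hlt using fun k => Set.Infinite.exists_gt hinf k
  obtain ⟨k, hk⟩ := exists_map_eq_zero φ (y := fun k => Pi.single (f k) 1)
    fun k j (hjk : j < k) => Pi.single_eq_of_ne (by have := hlt k; omega) 1
  exact hf k hk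

end Specker

/-- Specker's theorem: `Hom(∏_ℕ ℤ, ℤ) ≅ ⊕_ℕ ℤ`, via restriction of a
functional to the standard basis vectors: the map `φ ↦ (n ↦ φ (e n))` (where
`e n = Pi.single n 1`) is injective, lands in the finitely supported sequences, and hits
every finitely supported sequence.  Equivalently, the evaluation map
`⊕_ℕ ℤ → Hom(Hom(⊕_ℕ ℤ, ℤ), ℤ)` into the double dual is an isomorphism. -/
theorem stmt13 :
    Function.Injective (fun (φ : (ℕ → ℤ) →+ ℤ) (n : ℕ) => φ (Pi.single n 1)) ∧
    (∀ φ : (ℕ → ℤ) →+ ℤ, {n : ℕ | φ (Pi.single n 1) ≠ 0}.Finite) ∧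
    (∀ g : ℕ → ℤ, {n : ℕ | g n ≠ 0}.Finite →
      ∃ φ : (ℕ → ℤ) →+ ℤ, ∀ n, φ (Pi.single n 1) = g n) := by
  refine ⟨fun φ ψ h => ?_, Specker.finite_setOf_map_single_ne_zero, fun g hg => ?_⟩
  · rw [← sub_eq_zero]
    exact Specker.eq_zero_of_map_single _ fun n => by simp [congrFun h n]
  · refine ⟨∑ n ∈ hg.toFinset, g n • Pi.evalAddMonoidHom (fun _ => ℤ) n, fun n => ?_⟩
    simp [Pi.single_apply, eq_comm]
end

section
/- Let L be a simplicial complex in a metric space M with closed subset X ⊆ M, where L cellulates M ∖ X and the cells of L are scattered towards X. If S ⊆ L is closed in M, then S is contained in a subcomplex N of L that is closed in M (namely the union of all closed cells of L meeting S). -/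
open Filter

/-- Let `X ⊆ M` be closed and let `M ∖ X` be cellulated by a complex `L`
whose closed cells `K i` are scattered towards `X` (and any union of closed cells is a
closed subset of the subspace `M ∖ X`, as in a cell complex).  If `S ⊆ M ∖ X` is closed
in `M`, then `S` is contained in the subcomplex `N` consisting of all closed cells
meeting `S`, and `N` is closed in `M`. -/
theorem stmt14 {M : Type} [MetricSpace M] (X : Set M) (hX : IsClosed X)
    {ι : Type} (K : ι → Set M)
    (hne : ∀ i, (K i).Nonempty)
    (hcover : (⋃ i, K i) = Xᶜ)
    (hsubcl : ∀ J : Set ι, ∃ T : Set M, IsClosed T ∧ (⋃ i ∈ J, K i) = T ∩ Xᶜ)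
    (hscat : ∀ (n : ℕ → ι) (y y' : ℕ → M) (x : M), x ∈ X →
      (∀ k, y k ∈ K (n k)) → (∀ k, y' k ∈ K (n k)) →
      Tendsto y atTop (nhds x) → Tendsto y' atTop (nhds x))
    (S : Set M) (hSX : S ⊆ Xᶜ) (hScl : IsClosed S) :
    S ⊆ (⋃ i ∈ {i : ι | (K i ∩ S).Nonempty}, K i) ∧
    IsClosed (⋃ i ∈ {i : ι | (K i ∩ S).Nonempty}, K i) := by
  set J : Set ι := {i : ι | (K i ∩ S).Nonempty} with hJ
  set N : Set M := ⋃ i ∈ J, K i with hN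
  have hsub : S ⊆ N := by
    intro s hs
    have : s ∈ ⋃ i, K i := by rw [hcover]; exact hSX hs
    obtain ⟨i, hi⟩ := Set.mem_iUnion.1 this
    exact Set.mem_biUnion ⟨s, hi, hs⟩ hi
  refine ⟨hsub, ?_⟩
  obtain ⟨T, hTcl, hTeq⟩ := hsubcl J
  rw [← hN] at hTeq
  rw [← closure_subset_iff_isClosed]
  intro x hx
  by_cases hxX : x ∈ X
  · -- get a sequence in N converging to x
    obtain ⟨y, hyN, hylim⟩ := mem_closure_iff_seq_limit.1 hx
    choose n hnJ hyK using fun k => Set.mem_iUnion₂.1 (hyN k)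
    choose y' hy'K hy'S using fun k => (hnJ k : (K (n k) ∩ S).Nonempty)
    have := hscat n y y' x hxX hyK hy'K hylim
    have hxS : x ∈ S := hScl.mem_of_tendsto this (Eventually.of_forall hy'S)
    exact absurd hxX (hSX hxS)
  · have hNT : N ⊆ T := by rw [hTeq]; exact Set.inter_subset_left
    have hxT : x ∈ T := hTcl.closure_subset ((closure_mono hNT) hx)
    rw [hTeq]
    exact ⟨hxT, hxX⟩
end

section
/- Let M be a metric space, X ⊆ M closed, and L a cell complex cellulating M ∖ X with cells scattered towards X. Suppose S ⊆ L is a closed subset of L such that S ∩ C is compact for every subcomplex C of L with compact closure in M. Then S ∩ K is compact for every compact K ⊆ M. -/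
/-!
If `S ∩ Q` were not compact, it would not be closed, so some sequence `u k ∈ S ∩ Q` converges
to a point `x ∉ S`; as `S` is closed in `M ∖ X`, necessarily `x ∈ X`. Because the cells are
scattered towards `X`, the cells containing the `u k` shrink to `x`, so their union together
with `x` is compact. Hence `S` meets this subcomplex in a compact, thus closed, set containing
all `u k`, which forces `x ∈ S ⊆ M ∖ X`: a contradiction.
-/

open Filter Set Topology

def ScatteredTowards {M ι : Type*} [TopologicalSpace M] (K : ι → Set M) (X : Set M) : Prop :=
  ∀ (n : ℕ → ι) (y y' : ℕ → M) (x : M), x ∈ X →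
    (∀ k, y k ∈ K (n k)) → (∀ k, y' k ∈ K (n k)) →
    Tendsto y atTop (𝓝 x) → Tendsto y' atTop (𝓝 x)

section

variable {M : Type*} [TopologicalSpace M]

theorem isCompact_insert_iUnion_of_tendsto_smallSets {s : ℕ → Set M} {x : M}
    (hs : ∀ k, IsCompact (s k)) (h : Tendsto s atTop (𝓝 x).smallSets) :
    IsCompact (insert x (⋃ k, s k)) := by
  intro l _ hle
  by_cases hx : ClusterPt x l
  · exact ⟨x, mem_insert x _, hx⟩
  obtain ⟨U, hU, V, hV, hUV⟩ : ∃ U ∈ 𝓝 x, ∃ V ∈ l, ¬(U ∩ V).Nonempty := by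
    simpa [clusterPt_iff_nonempty] using hx
  obtain ⟨N, hN⟩ := eventually_atTop.1 (h.eventually (eventually_smallSets_subset.2 hU))
  -- Away from `U`, only the finitely many sets `s k` with `k < N` remain.
  have hfin : ⋃ k ∈ Iio N, s k ∈ l := by
    filter_upwards [hV, le_principal_iff.1 hle] with y hyV hy
    rcases hy with rfl | hy
    · exact (hUV ⟨_, mem_of_mem_nhds hU, hyV⟩).elim
    obtain ⟨k, hk⟩ := mem_iUnion.1 hy
    exact mem_biUnion (mem_Iio.2 (not_le.1 fun hNk => hUV ⟨y, hN k hNk hk, hyV⟩)) hk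
  obtain ⟨y, hy, hyl⟩ :=
    (finite_Iio N).isCompact_biUnion (fun k _ => hs k) (le_principal_iff.2 hfin)
  exact ⟨y, subset_insert x _ (iUnion₂_subset_iUnion _ _ hy), hyl⟩

variable {ι : Type*} {K : ι → Set M} {X : Set M} {n : ℕ → ι} {u : ℕ → M} {x : M}

theorem ScatteredTowards.tendsto_smallSets (h : ScatteredTowards K X) (hx : x ∈ X)
    (hu : ∀ k, u k ∈ K (n k)) (hux : Tendsto u atTop (𝓝 x)) :
    Tendsto (fun k => K (n k)) atTop (𝓝 x).smallSets := by
  refine tendsto_smallSets_iff.2 fun U hU => ?_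
  by_contra hne
  obtain ⟨φ, hφ, hφU⟩ := extraction_of_frequently_atTop (not_eventually.1 hne)
  choose y hyK hyU using fun k => not_subset.1 (hφU k)
  have hyx : Tendsto y atTop (𝓝 x) :=
    h (n ∘ φ) (u ∘ φ) y x hx (fun k => hu (φ k)) hyK (hux.comp hφ.tendsto_atTop)
  obtain ⟨k, hk⟩ := (hyx.eventually hU).exists
  exact hyU k hk

theorem ScatteredTowards.isCompact_closure_iUnion [R1Space M] (h : ScatteredTowards K X)
    (hK : ∀ i, IsCompact (K i)) (hx : x ∈ X) (hu : ∀ k, u k ∈ K (n k))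
    (hux : Tendsto u atTop (𝓝 x)) :
    IsCompact (closure (⋃ k, K (n k))) :=
  (isCompact_insert_iUnion_of_tendsto_smallSets (fun k => hK (n k))
    (h.tendsto_smallSets hx hu hux)).closure_of_subset (subset_insert x _)

end

theorem stmt15_general {M : Type} [MetricSpace M] (X : Set M)
    {ι : Type} (K : ι → Set M)
    (hcpt : ∀ i, IsCompact (K i))
    (hcover : (⋃ i, K i) = Xᶜ)
    (hscat : ∀ (n : ℕ → ι) (y y' : ℕ → M) (x : M), x ∈ X →
      (∀ k, y k ∈ K (n k)) → (∀ k, y' k ∈ K (n k)) →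
      Tendsto y atTop (nhds x) → Tendsto y' atTop (nhds x))
    (S : Set M)
    (hScl : ∃ T : Set M, IsClosed T ∧ S = T ∩ Xᶜ)
    (hSκ : ∀ J : Set ι, IsCompact (closure (⋃ i ∈ J, K i)) →
      IsCompact (S ∩ ⋃ i ∈ J, K i)) :
    ∀ Q : Set M, IsCompact Q → IsCompact (S ∩ Q) := by
  intro Q hQ
  obtain ⟨T, hT, rfl⟩ := hScl
  refine hQ.of_isClosed_subset (closure_subset_iff_isClosed.1 fun x hx => ?_) inter_subset_right
  have hxTQ : x ∈ T ∩ Q :=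
    closure_minimal (inter_subset_inter_left Q inter_subset_left) (hT.inter hQ.isClosed) hx
  by_cases hxX : x ∈ X
  swap
  · exact ⟨⟨hxTQ.1, hxX⟩, hxTQ.2⟩
  exfalso
  obtain ⟨u, hu, hux⟩ := mem_closure_iff_seq_limit.1 hx
  choose n hn using fun k => mem_iUnion.1 (hcover ▸ (hu k).1.2)
  have hC : IsCompact ((T ∩ Xᶜ) ∩ ⋃ i ∈ range n, K i) := by
    refine hSκ (range n) ?_
    rw [biUnion_range]
    exact ScatteredTowards.isCompact_closure_iUnion hscat hcpt hxX hn hux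
  have hxC : x ∈ (T ∩ Xᶜ) ∩ ⋃ i ∈ range n, K i :=
    hC.isClosed.mem_of_tendsto hux
      (Eventually.of_forall fun k => ⟨(hu k).1, mem_biUnion (mem_range_self k) (hn k)⟩)
  exact hxC.1.2 hxX

/-- Let `X ⊆ M` be closed and `M ∖ X` be cellulated by a cell complex with
(compact) closed cells `K i` scattered towards `X`.  Suppose `S` is a closed subset of
the subspace `M ∖ X` such that `S ∩ C` is compact for every subcomplex `C` (union of
closed cells) having compact closure in `M`.  Then `S ∩ Q` is compact for every compact
`Q ⊆ M`. -/
theorem stmt15 {M : Type} [MetricSpace M] (X : Set M) (hX : IsClosed X)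
    {ι : Type} (K : ι → Set M)
    (hne : ∀ i, (K i).Nonempty)
    (hcpt : ∀ i, IsCompact (K i))
    (hcover : (⋃ i, K i) = Xᶜ)
    (hscat : ∀ (n : ℕ → ι) (y y' : ℕ → M) (x : M), x ∈ X →
      (∀ k, y k ∈ K (n k)) → (∀ k, y' k ∈ K (n k)) →
      Tendsto y atTop (nhds x) → Tendsto y' atTop (nhds x))
    (S : Set M) (hSX : S ⊆ Xᶜ)
    (hScl : ∃ T : Set M, IsClosed T ∧ S = T ∩ Xᶜ)
    (hSκ : ∀ J : Set ι, IsCompact (closure (⋃ i ∈ J, K i)) →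
      IsCompact (S ∩ ⋃ i ∈ J, K i)) :
    ∀ Q : Set M, IsCompact Q → IsCompact (S ∩ Q) :=
  stmt15_general X K hcpt hcover hscat S hScl hSκ
end
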